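/- Let 𝕏 = (X, ρ, μ) be a metric measure space and let B be an uncentered differentiation basis in 𝕏 such that M_B f is measurable for every p ∈ [1,∞] and every f ∈ L^p(𝕏). Define max(B) := {p ∈ [1,∞] : M_B satisfies the weak-type (p,p) inequality}, with the convention that weak-type (∞,∞) means boundedness on L^∞(𝕏). Then max(B) takes one of the three forms {∞}, [p₀,∞], (p₀,∞] for some p₀ ∈ [1,∞). -/

import Mathlib

open MeasureTheory Filter Metric Topology ENNReal

section Framework

variable {X : Type*} [MetricSpace X] [MeasurableSpace X] (μ : MeasureTheory.Measure X)

/-- A sequence of sets `S : ℕ → Set X` *contracts to* `x` with respect to the family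
assignment `Bx`: every `S n` belongs to `Bx x` and `S n ⊆ B(x, r n)` for some radii
`r n → 0`. -/
def ContractsTo (Bx : X → Set (Set X)) (x : X) (S : ℕ → Set X) : Prop :=
  (∀ n, S n ∈ Bx x) ∧
  ∃ r : ℕ → ℝ, Tendsto r atTop (𝓝 0) ∧ ∀ n, S n ⊆ Metric.ball x (r n)

/-- A differentiation basis in a metric measure space: for every `x`, a family `sets x` of
measurable sets containing `x` with finite positive measure, such that almost every point
admits a sequence contracting to it. -/
structure DiffBasis where
  sets : X → Set (Set X)
  measurableSet' : ∀ x, ∀ S ∈ sets x, MeasurableSet S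
  mem_of_mem : ∀ x, ∀ S ∈ sets x, x ∈ S
  measure_pos : ∀ x, ∀ S ∈ sets x, 0 < μ S
  measure_lt_top : ∀ x, ∀ S ∈ sets x, μ S < ⊤
  ae_contracts : ∀ᵐ x ∂μ, ∃ S : ℕ → Set X, ContractsTo sets x S

namespace DiffBasis

variable {μ}

/-- The whole family `B = ⋃ₓ B(x)`. -/
def family (B : DiffBasis μ) : Set (Set X) := ⋃ x, B.sets x

/-- `B` is uncentered if `B(x) = {S ∈ B : x ∈ S}` for every `x`. -/
def Uncentered (B : DiffBasis μ) : Prop :=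
  ∀ x, B.sets x = {S | S ∈ B.family ∧ x ∈ S}

/-- A Busemann–Feller basis: an uncentered basis all of whose members are open. -/
def BusemannFeller (B : DiffBasis μ) : Prop :=
  B.Uncentered ∧ ∀ S ∈ B.family, IsOpen S

/-- `B` differentiates `L^p(𝕏)`: for every `f ∈ L^p`, for almost every `x`, the averages of
`f` along any sequence contracting to `x` converge to `f x`. -/
def Differentiates (B : DiffBasis μ) (p : ℝ≥0∞) : Prop :=
  ∀ f : X → ℝ, MemLp f p μ →
    ∀ᵐ x ∂μ, ∀ S : ℕ → Set X, ContractsTo B.sets x S →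
      Tendsto (fun n => ⨍ y in S n, f y ∂μ) atTop (𝓝 (f x))

/-- `diff(B) = {p ∈ [1,∞] : B differentiates L^p}`. -/
def diffSet (B : DiffBasis μ) : Set ℝ≥0∞ := {p : ℝ≥0∞ | 1 ≤ p ∧ B.Differentiates p}

end DiffBasis

end Framework
section Maximal

variable {X : Type*} [MetricSpace X] [MeasurableSpace X]

/-- The average of `‖f‖` over `S`, as an extended nonnegative real. -/
noncomputable def avgNorm (μ : MeasureTheory.Measure X) (f : X → ℝ) (S : Set X) : ℝ≥0∞ :=
  (∫⁻ y in S, (‖f y‖₊ : ℝ≥0∞) ∂μ) / μ S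

/-- The maximal operator associated with the collection `𝒮`:
`M_𝒮 f (x) = sup {Avg_{|f|}(S) : x ∈ S ∈ 𝒮}` (the supremum over the empty set is `0`). -/
noncomputable def maximalFn (μ : MeasureTheory.Measure X) (𝒮 : Set (Set X)) (f : X → ℝ)
    (x : X) : ℝ≥0∞ :=
  ⨆ (S : Set X) (_ : S ∈ 𝒮) (_ : x ∈ S), avgNorm μ f S

/-- The maximal operator of `𝒮` satisfies the weak-type `(p,p)` inequality with constant `C`. -/
def HasWeakType (μ : MeasureTheory.Measure X) (𝒮 : Set (Set X)) (p : ℝ) (C : ℝ≥0∞) : Prop :=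
  ∀ f : X → ℝ, MemLp f (ENNReal.ofReal p) μ → ∀ l : ℝ≥0∞, l ≠ 0 → l ≠ ⊤ →
    l ^ p * μ {x | l < maximalFn μ 𝒮 f x} ≤
      C ^ p * eLpNorm f (ENNReal.ofReal p) μ ^ p

/-- The maximal operator of `𝒮` is bounded on `L^∞` (the convention for weak type `(∞,∞)`). -/
def BoundedOnLinfty (μ : MeasureTheory.Measure X) (𝒮 : Set (Set X)) : Prop :=
  ∃ C : ℝ≥0∞, C ≠ ⊤ ∧ ∀ f : X → ℝ, MemLp f ⊤ μ →
    essSup (maximalFn μ 𝒮 f) μ ≤ C * eLpNorm f ⊤ μ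

/-- `max(𝒮) = {p ∈ [1,∞] : M_𝒮 satisfies the weak-type (p,p) inequality}`, where weak type
`(∞,∞)` means boundedness on `L^∞`. -/
def maxSet (μ : MeasureTheory.Measure X) (𝒮 : Set (Set X)) : Set ℝ≥0∞ :=
  {p : ℝ≥0∞ | 1 ≤ p ∧
    ((p ≠ ⊤ ∧ ∃ C : ℝ≥0∞, C ≠ ⊤ ∧ HasWeakType μ 𝒮 p.toReal C) ∨
      (p = ⊤ ∧ BoundedOnLinfty μ 𝒮))}

/-- The smallest weak-type `(p,p)` constant `‖M_𝒮‖_{L^p → L^{p,∞}}`. -/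
noncomputable def weakNorm (μ : MeasureTheory.Measure X) (𝒮 : Set (Set X)) (p : ℝ) : ℝ≥0∞ :=
  sInf {C : ℝ≥0∞ | HasWeakType μ 𝒮 p C}

end Maximal

/-!
Truncation at height `λ/2` transfers weak type `(p,p)` to weak type `(q,q)` for every `q ≥ p`:
with `g = f · 1_{|f| > λ/2}` one has `M f ≤ M g + λ/2`, so `{M f > λ} ⊆ {M g > λ/2}`, and
`(λ/2)^{q-p} |g|^p ≤ |f|^q` pointwise. Since `M_B` is always bounded on `L^∞`, `max(B)` is an upper
set of `[1,∞]` containing `∞`, hence an interval `[p₀,∞]` or `(p₀,∞]` with `p₀ = inf max(B)`.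
-/

open Set

theorem IsUpperSet.eq_Ici_sInf_or_eq_Ioi_sInf {α : Type*} [CompleteLinearOrder α] {s : Set α}
    (hs : IsUpperSet s) : s = Ici (sInf s) ∨ s = Ioi (sInf s) := by
  have hIoi : Ioi (sInf s) ⊆ s := fun q hq => by
    obtain ⟨r, hr, hrq⟩ := sInf_lt_iff.1 hq
    exact hs hrq.le hr
  have hIci : s ⊆ Ici (sInf s) := fun q hq => sInf_le hq
  by_cases hmem : sInf s ∈ s
  · exact Or.inl (hIci.antisymm (hs.Ici_subset hmem))
  · exact Or.inr (Subset.antisymm (fun q hq => (hIci hq).lt_of_ne fun he => hmem (he ▸ hq)) hIoi)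

section MaximalFunction

variable {X : Type*} [MeasurableSpace X] {μ : Measure X} {𝒮 : Set (Set X)}

theorem eLpNorm_ofReal_rpow {p : ℝ} (hp : 0 < p) (f : X → ℝ) :
    eLpNorm f (ENNReal.ofReal p) μ ^ p = ∫⁻ x, ‖f x‖ₑ ^ p ∂μ := by
  rw [ENNReal.ofReal_eq_coe_nnreal hp.le]
  exact eLpNorm_nnreal_pow_eq_lintegral (ne_of_gt hp)

theorem avgNorm_le_maximalFn (f : X → ℝ) {S : Set X} (hS : S ∈ 𝒮) {x : X} (hx : x ∈ S) :
    avgNorm μ f S ≤ maximalFn μ 𝒮 f x :=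
  le_iSup₂_of_le S hS (le_iSup_of_le hx le_rfl)

theorem avgNorm_le_eLpNorm_top (f : X → ℝ) (S : Set X) : avgNorm μ f S ≤ eLpNorm f ⊤ μ := by
  refine ENNReal.div_le_of_le_mul ?_
  calc ∫⁻ y in S, ‖f y‖ₑ ∂μ ≤ ∫⁻ _ in S, eLpNormEssSup f μ ∂μ :=
        lintegral_mono_ae (ae_restrict_of_ae (enorm_ae_le_eLpNormEssSup f μ))
    _ = eLpNorm f ⊤ μ * μ S := setLIntegral_const S _

theorem boundedOnLinfty : BoundedOnLinfty μ 𝒮 := by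
  refine ⟨1, one_ne_top, fun f _ => ?_⟩
  rw [one_mul]
  exact essSup_le_of_ae_le _ (.of_forall fun x =>
    iSup₂_le fun S _ => iSup_le fun _ => avgNorm_le_eLpNorm_top f S)

theorem avgNorm_le_avgNorm_add {f g : X → ℝ} {t : ℝ≥0∞} (hfg : ∀ y, ‖f y‖ₑ ≤ ‖g y‖ₑ + t)
    (S : Set X) : avgNorm μ f S ≤ avgNorm μ g S + t :=
  calc (∫⁻ y in S, ‖f y‖ₑ ∂μ) / μ S
      ≤ (∫⁻ y in S, (‖g y‖ₑ + t) ∂μ) / μ S := by gcongr with y; exact hfg y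
    _ = (∫⁻ y in S, ‖g y‖ₑ ∂μ) / μ S + t * μ S / μ S := by
        rw [lintegral_add_right _ measurable_const, setLIntegral_const, ENNReal.add_div]
    _ ≤ avgNorm μ g S + t := add_le_add le_rfl (ENNReal.div_le_of_le_mul le_rfl)

theorem maximalFn_le_maximalFn_add {f g : X → ℝ} {t : ℝ≥0∞} (hfg : ∀ y, ‖f y‖ₑ ≤ ‖g y‖ₑ + t)
    (x : X) : maximalFn μ 𝒮 f x ≤ maximalFn μ 𝒮 g x + t :=
  iSup₂_le fun S hS => iSup_le fun hx =>
    (avgNorm_le_avgNorm_add hfg S).trans (add_le_add_left (avgNorm_le_maximalFn g hS hx) t)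

theorem setOf_two_mul_lt_maximalFn_subset {f g : X → ℝ} {t : ℝ≥0∞}
    (hfg : ∀ y, ‖f y‖ₑ ≤ ‖g y‖ₑ + t) :
    {x | 2 * t < maximalFn μ 𝒮 f x} ⊆ {x | t < maximalFn μ 𝒮 g x} := fun x hx =>
  show t < _ from lt_of_not_ge fun hle => (hx.trans_le <|
    calc maximalFn μ 𝒮 f x ≤ maximalFn μ 𝒮 g x + t := maximalFn_le_maximalFn_add hfg x
      _ ≤ 2 * t := by rw [two_mul]; gcongr).false

end MaximalFunction

section Truncation

variable {X : Type*} (f : X → ℝ) (t : ℝ≥0∞)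

noncomputable def superlevelPart : X → ℝ := {y | t < ‖f y‖ₑ}.indicator f

theorem enorm_le_enorm_superlevelPart_add (y : X) : ‖f y‖ₑ ≤ ‖superlevelPart f t y‖ₑ + t := by
  by_cases h : t < ‖f y‖ₑ
  · simp [superlevelPart, h]
  · exact le_add_left (not_lt.1 h)

theorem rpow_mul_enorm_superlevelPart_rpow_le {p q : ℝ} (hp : 0 < p) (hpq : p ≤ q) (y : X) :
    t ^ (q - p) * ‖superlevelPart f t y‖ₑ ^ p ≤ ‖f y‖ₑ ^ q := by
  by_cases h : t < ‖f y‖ₑ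
  · have hf0 : ‖f y‖ₑ ≠ 0 := (zero_le.trans_lt h).ne'
    calc t ^ (q - p) * ‖superlevelPart f t y‖ₑ ^ p ≤ ‖f y‖ₑ ^ (q - p) * ‖f y‖ₑ ^ p := by
          simp only [superlevelPart, indicator_of_mem (show y ∈ {y | t < ‖f y‖ₑ} from h)]
          gcongr
      _ = ‖f y‖ₑ ^ q := by rw [← ENNReal.rpow_add _ _ hf0 enorm_ne_top, sub_add_cancel]
  · simp [superlevelPart, h, ENNReal.zero_rpow_of_pos hp]

variable [MeasurableSpace X] {μ : Measure X}

theorem rpow_mul_lintegral_superlevelPart_le {p q : ℝ} (hp : 0 < p) (hpq : p ≤ q) :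
    t ^ (q - p) * ∫⁻ y, ‖superlevelPart f t y‖ₑ ^ p ∂μ ≤ ∫⁻ y, ‖f y‖ₑ ^ q ∂μ :=
  (lintegral_const_mul_le _ _).trans
    (lintegral_mono fun y => rpow_mul_enorm_superlevelPart_rpow_le f t hp hpq y)

variable {f t}

theorem MeasureTheory.MemLp.superlevelPart {p q : ℝ} (hp : 0 < p) (hpq : p ≤ q)
    (hf : MemLp f (.ofReal q) μ) (ht0 : t ≠ 0) (ht : t ≠ ⊤) :
    MemLp (superlevelPart f t) (.ofReal p) μ := by
  have hq : 0 < q := hp.trans_le hpq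
  refine ⟨hf.1.indicator₀ (nullMeasurableSet_lt aemeasurable_const hf.1.aemeasurable.enorm), ?_⟩
  rw [eLpNorm_lt_top_iff_lintegral_rpow_enorm_lt_top (by simpa using hp) ofReal_ne_top,
    toReal_ofReal hp.le]
  refine lt_top_of_mul_ne_top_right (ne_top_of_le_ne_top ?_ (rpow_mul_lintegral_superlevelPart_le
    f t hp hpq)) (by simp [ENNReal.rpow_eq_zero_iff, ht0, ht])
  rw [← eLpNorm_ofReal_rpow hq]
  exact rpow_ne_top_of_nonneg hq.le hf.eLpNorm_lt_top.ne

end Truncation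

section WeakType

variable {X : Type*} [MeasurableSpace X] {μ : Measure X} {𝒮 : Set (Set X)}

theorem HasWeakType.of_le {p q : ℝ} {C : ℝ≥0∞} (hp : 0 < p) (hpq : p ≤ q)
    (hC : HasWeakType μ 𝒮 p C) : HasWeakType μ 𝒮 q ((2 ^ q * C ^ p) ^ q⁻¹) := by
  have hq : 0 < q := hp.trans_le hpq
  intro f hf l hl0 hl
  set t := l / 2
  have ht0 : t ≠ 0 := by simp [t, hl0]
  have ht : t ≠ ⊤ := ENNReal.div_ne_top hl two_ne_zero
  have hlt : l = 2 * t := (ENNReal.mul_div_cancel two_ne_zero ofNat_ne_top).symm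
  have hweak := hC _ (hf.superlevelPart hp hpq ht0 ht) t ht0 ht
  rw [eLpNorm_ofReal_rpow hp] at hweak
  rw [eLpNorm_ofReal_rpow hq, ← ENNReal.rpow_mul, inv_mul_cancel₀ hq.ne', ENNReal.rpow_one]
  calc l ^ q * μ {x | l < maximalFn μ 𝒮 f x}
      ≤ (2 * t) ^ q * μ {x | t < maximalFn μ 𝒮 (superlevelPart f t) x} := by
        rw [hlt]
        exact mul_le_mul_right (measure_mono
          (setOf_two_mul_lt_maximalFn_subset (enorm_le_enorm_superlevelPart_add f t))) _
    _ = 2 ^ q * t ^ (q - p) * (t ^ p * μ {x | t < maximalFn μ 𝒮 (superlevelPart f t) x}) := by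
        rw [ENNReal.mul_rpow_of_nonneg _ _ hq.le, ← sub_add_cancel q p,
          ENNReal.rpow_add _ _ ht0 ht, add_sub_cancel_right]
        ring
    _ ≤ 2 ^ q * t ^ (q - p) * (C ^ p * ∫⁻ y, ‖superlevelPart f t y‖ₑ ^ p ∂μ) := by gcongr
    _ = 2 ^ q * C ^ p * (t ^ (q - p) * ∫⁻ y, ‖superlevelPart f t y‖ₑ ^ p ∂μ) := by ring
    _ ≤ 2 ^ q * C ^ p * ∫⁻ y, ‖f y‖ₑ ^ q ∂μ := by
        gcongr
        exact rpow_mul_lintegral_superlevelPart_le f t hp hpq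

theorem top_mem_maxSet : ⊤ ∈ maxSet μ 𝒮 := ⟨le_top, .inr ⟨rfl, boundedOnLinfty⟩⟩

theorem isUpperSet_maxSet : IsUpperSet (maxSet μ 𝒮) := by
  rintro p q hpq ⟨hp1, hp⟩
  refine ⟨hp1.trans hpq, ?_⟩
  rcases eq_or_ne q ⊤ with rfl | hq
  · exact .inr ⟨rfl, boundedOnLinfty⟩
  obtain ⟨hp, C, hC, hweak⟩ | ⟨rfl, -⟩ := hp
  · have hp0 : 0 < p.toReal := toReal_pos (one_pos.trans_le hp1).ne' hp
    refine .inl ⟨hq, _, ?_, hweak.of_le hp0 (toReal_mono hq hpq)⟩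
    exact rpow_ne_top_of_nonneg (by simp [(hp0.trans_le (toReal_mono hq hpq)).le])
      (mul_ne_top (by simp) (rpow_ne_top_of_nonneg hp0.le hC))
  · exact absurd (top_le_iff.1 hpq) hq

end WeakType

theorem statement15_general {X : Type*} [MetricSpace X] [MeasurableSpace X]
    {μ : Measure X} (B : DiffBasis μ) :
    ∃ p₀ : ℝ≥0∞, 1 ≤ p₀ ∧ p₀ ≠ ⊤ ∧
      (maxSet μ B.family = {⊤} ∨ maxSet μ B.family = Set.Icc p₀ ⊤ ∨
        maxSet μ B.family = Set.Ioc p₀ ⊤) := by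
  set T := maxSet μ B.family
  have hupper : IsUpperSet T := isUpperSet_maxSet
  have htopT : ⊤ ∈ T := top_mem_maxSet
  rcases eq_or_ne (sInf T) ⊤ with htop | htop
  · refine ⟨1, le_rfl, one_ne_top, .inl ?_⟩
    rcases hupper.eq_Ici_sInf_or_eq_Ioi_sInf with h | h <;> rw [htop] at h
    · rwa [Ici_top] at h
    · exact absurd (h ▸ htopT : ⊤ ∈ Ioi ⊤) (lt_irrefl _)
  · refine ⟨sInf T, le_sInf fun p hp => hp.1, htop, .inr ?_⟩
    rw [Icc_top, Ioc_top]
    exact hupper.eq_Ici_sInf_or_eq_Ioi_sInf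

/-- **Theorem (statement 15).** Let `B` be an uncentered differentiation basis in a metric
measure space `𝕏` such that `M_B f` is measurable for every `p ∈ [1,∞]` and `f ∈ L^p(𝕏)`.
Then `max(B)` takes one of the three forms `{∞}`, `[p₀,∞]`, `(p₀,∞]` for some `p₀ ∈ [1,∞)`. -/
theorem statement15 {X : Type*} [MetricSpace X] [MeasurableSpace X] [OpensMeasurableSpace X]
    {μ : Measure X} (B : DiffBasis μ) (hunc : B.Uncentered)
    (hmeas : ∀ p : ℝ≥0∞, 1 ≤ p → ∀ f : X → ℝ, MemLp f p μ →
      Measurable (maximalFn μ B.family f)) :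
    ∃ p₀ : ℝ≥0∞, 1 ≤ p₀ ∧ p₀ ≠ ⊤ ∧
      (maxSet μ B.family = {⊤} ∨ maxSet μ B.family = Set.Icc p₀ ⊤ ∨
        maxSet μ B.family = Set.Ioc p₀ ⊤) :=
  statement15_general B
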